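/- arXiv:1908.01124 — 9 statements merged into one kernel-verified Lean document; each statement's English description precedes it below -/
import Mathlib

section
/- Let p ∈ ℕ, p ≥ 1, and let ζ = (ξ, η) ∈ ℝ² with ξ ≠ 0. Then the multiexponential map Γ^{(p+1)} : (ℝ²)^{p+1} → ℝ^{p+2} of the filiform group of step p+1 is a submersion at (ζ, ζ, …, ζ): its Fréchet derivative at the point (ζ, ζ, …, ζ) ∈ (ℝ²)^{p+1} is a surjective linear map from (ℝ²)^{p+1} onto ℝ^{p+2}. -/
/-!
The integrals in `Γ` expand binomially into polynomials in the `u_j`, so `Γ` is a polynomial map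
and in particular differentiable. With all `u_j` frozen at `ξ`, `Γ` is affine in `v`, and its
last `p + 1` coordinates are `M v` with `M k j = ξ^k / k! * ∫₀¹ (j + s)^k ds`. Expanding
`(j + s)^k` writes `M` as a diagonal matrix with entries `ξ^k / k!`, times a unitriangular matrix,
times the transposed Vandermonde matrix of the nodes `0, …, p`; hence `M` is invertible when
`ξ ≠ 0`. The `v`-directions thus fill the hyperplane `{y 0 = 0}`, and a `u`-direction supplies
the first coordinate.
-/

/-- The multiexponential map `Γ^{(q)} : (ℝ²)^q → ℝ^{p+2}` of the filiform group of
step `p+1`.  For `w j = (u j, v j)`, the first two coordinates are `∑ u j` and `∑ v j`,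
and for `k = 1, …, p` the coordinate `τ_k` (stored at index `k+1`) is
`∑ j, v j * ∫₀¹ ((u 0 + ⋯ + u (j-1)) + s * u j)^k / k! ds`. -/
noncomputable def filiformGamma (p q : ℕ) (w : Fin q → ℝ × ℝ) : Fin (p + 2) → ℝ :=
  fun i =>
    if (i : ℕ) = 0 then ∑ j, (w j).1
    else if (i : ℕ) = 1 then ∑ j, (w j).2
    else ∑ j, (w j).2 *
      ∫ s in (0:ℝ)..1,
        ((∑ i' ∈ Finset.univ.filter (fun i' => i' < j), (w i').1) + s * (w j).1)
            ^ ((i : ℕ) - 1) / (Nat.factorial ((i : ℕ) - 1) : ℝ)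

open Finset Matrix
open scoped Nat

theorem integral_add_mul_pow (a b : ℝ) (k : ℕ) :
    ∫ s in (0:ℝ)..1, (a + s * b) ^ k =
      ∑ m ∈ range (k + 1), (k.choose m : ℝ) / ((k - m : ℕ) + 1) * a ^ m * b ^ (k - m) := by
  simp_rw [add_pow, mul_pow]
  rw [intervalIntegral.integral_finsetSum fun m _ =>
    (by fun_prop : Continuous _).intervalIntegrable _ _]
  refine sum_congr rfl fun m _ => ?_
  calc ∫ s in (0:ℝ)..1, a ^ m * (s ^ (k - m) * b ^ (k - m)) * (k.choose m : ℝ)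
      = ∫ s in (0:ℝ)..1, (k.choose m : ℝ) * a ^ m * b ^ (k - m) * s ^ (k - m) := by
        congr 1; ext s; ring
    _ = _ := by rw [intervalIntegral.integral_const_mul, integral_pow]; field_simp; simp

theorem differentiable_integral_add_mul_pow (k : ℕ) :
    Differentiable ℝ fun ab : ℝ × ℝ => ∫ s in (0:ℝ)..1, (ab.1 + s * ab.2) ^ k := by
  simp_rw [integral_add_mul_pow]
  fun_prop

noncomputable def integralPowMatrix {n : ℕ} (x : Fin n → ℝ) : Matrix (Fin n) (Fin n) ℝ :=
  of fun k j => ∫ s in (0:ℝ)..1, (x j + s) ^ (k : ℕ)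

theorem integralPowMatrix_eq_mul_vandermonde {n : ℕ} (x : Fin n → ℝ) :
    integralPowMatrix x =
      of (fun k m : Fin n => ((k : ℕ).choose m : ℝ) / ((k - m : ℕ) + 1)) * (vandermonde x)ᵀ := by
  ext k j
  have h := integral_add_mul_pow (x j) 1 k
  simp only [mul_one, one_pow] at h
  rw [integralPowMatrix, of_apply, h, mul_apply]
  simp only [of_apply, transpose_apply, vandermonde_apply]
  rw [Fin.sum_univ_eq_sum_range (fun m => ((k : ℕ).choose m : ℝ) / ((k - m : ℕ) + 1) * x j ^ m)]
  refine sum_subset (range_subset_range.2 k.2) fun m _ hm => ?_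
  simp [Nat.choose_eq_zero_of_lt (by simpa using hm : (k : ℕ) < m)]

theorem det_integralPowMatrix {n : ℕ} (x : Fin n → ℝ) :
    (integralPowMatrix x).det = (vandermonde x).det := by
  have hlow : (of fun k m : Fin n => ((k : ℕ).choose m : ℝ) / ((k - m : ℕ) + 1)).IsLowerTriangular :=
    fun k m hkm => by simp [Nat.choose_eq_zero_of_lt (show (k : ℕ) < m from hkm)]
  rw [integralPowMatrix_eq_mul_vandermonde, det_mul, det_transpose,
    det_of_isLowerTriangular _ hlow]
  simp

theorem fderiv_apply_eq_of_line {𝕜 E F : Type*} [NontriviallyNormedField 𝕜]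
    [NormedAddCommGroup E] [NormedSpace 𝕜 E] [NormedAddCommGroup F] [NormedSpace 𝕜 F]
    {f : E → F} {x v : E} {c : F} (hf : DifferentiableAt 𝕜 f x)
    (hline : ∀ t : 𝕜, f (x + t • v) = f x + t • c) : fderiv 𝕜 f x v = c := by
  refine (hf.hasFDerivAt.hasLineDerivAt v).unique ?_
  simpa [HasLineDerivAt, hline] using ((hasDerivAt_id (0 : 𝕜)).smul_const c).const_add (f x)

theorem LinearMap.surjective_of_cons_zero_mem_range {R M : Type*} [CommRing R] [AddCommGroup M]
    [Module R M] {n : ℕ} (L : M →ₗ[R] Fin (n + 1) → R)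
    (hcons : ∀ z, Fin.cons 0 z ∈ LinearMap.range L) (e : M) (he : L e 0 = 1) : Function.Surjective L := by
  intro y
  obtain ⟨d, hd⟩ := hcons (Fin.tail (y - y 0 • L e))
  refine ⟨y 0 • e + d, funext fun i => ?_⟩
  induction i using Fin.cases with
  | zero => simp [hd, he]
  | succ i => simp [hd, Fin.tail]

section Filiform

variable {p q : ℕ}

theorem filiformGamma_zero (w : Fin q → ℝ × ℝ) : filiformGamma p q w 0 = ∑ j, (w j).1 := rfl

theorem filiformGamma_succ (w : Fin q → ℝ × ℝ) (k : Fin (p + 1)) :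
    filiformGamma p q w k.succ = ∑ j, (w j).2 *
      ∫ s in (0:ℝ)..1,
        ((∑ i ∈ univ.filter (fun i => i < j), (w i).1) + s * (w j).1) ^ (k : ℕ) / (k ! : ℝ) := by
  rcases k with ⟨_ | k, hk⟩ <;> simp [filiformGamma]

theorem differentiable_filiformGamma : Differentiable ℝ (filiformGamma p q) := by
  refine differentiable_pi.2 fun i => ?_
  induction i using Fin.cases with
  | zero => simp only [filiformGamma_zero]; fun_prop
  | succ k =>
    simp only [filiformGamma_succ, intervalIntegral.integral_div]
    have hI (j : Fin q) : Differentiable ℝ fun w : Fin q → ℝ × ℝ =>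
        ∫ s in (0:ℝ)..1, ((∑ i ∈ univ.filter (fun i => i < j), (w i).1) + s * (w j).1) ^ (k : ℕ) :=
      (differentiable_integral_add_mul_pow k).comp
        (f := fun w : Fin q → ℝ × ℝ => (∑ i ∈ univ.filter (fun i => i < j), (w i).1, (w j).1))
        (by fun_prop)
    fun_prop

noncomputable def filiformCoeffMatrix (p q : ℕ) (ξ : ℝ) : Matrix (Fin (p + 1)) (Fin q) ℝ :=
  of fun k j => ξ ^ (k : ℕ) / (k ! : ℝ) * ∫ s in (0:ℝ)..1, ((j : ℝ) + s) ^ (k : ℕ)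

theorem isUnit_filiformCoeffMatrix {ξ : ℝ} (hξ : ξ ≠ 0) :
    IsUnit (filiformCoeffMatrix p (p + 1) ξ) := by
  have h : filiformCoeffMatrix p (p + 1) ξ =
      diagonal (fun k : Fin (p + 1) => ξ ^ (k : ℕ) / (k ! : ℝ)) *
        integralPowMatrix (fun j => (j : ℝ)) := by
    ext k j; simp [filiformCoeffMatrix, integralPowMatrix]
  rw [isUnit_iff_isUnit_det, h, det_mul, det_diagonal, det_integralPowMatrix, isUnit_iff_ne_zero]
  refine mul_ne_zero (prod_ne_zero_iff.2 fun k _ => by positivity) ?_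
  exact det_vandermonde_ne_zero_iff.2 fun a b hab => Fin.val_injective (Nat.cast_injective hab)

theorem filiformGamma_const_fst (ξ : ℝ) (b : Fin q → ℝ) :
    filiformGamma p q (fun j => (ξ, b j)) =
      Fin.cons (q * ξ) (filiformCoeffMatrix p q ξ *ᵥ b) := by
  ext i
  induction i using Fin.cases with
  | zero => simp [filiformGamma_zero]
  | succ k =>
    rw [filiformGamma_succ, Fin.cons_succ, mulVec, dotProduct]
    refine sum_congr rfl fun j _ => ?_
    have hsum : ∑ i ∈ univ.filter (fun i => i < j), ξ = j * ξ := by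
      rw [sum_const, filter_gt_eq_Iio, Fin.card_Iio, nsmul_eq_mul]
    have hint : ∀ s : ℝ, ((j : ℝ) * ξ + s * ξ) ^ (k : ℕ) / (k ! : ℝ) =
        ξ ^ (k : ℕ) / (k ! : ℝ) * ((j : ℝ) + s) ^ (k : ℕ) := fun s => by
      rw [← add_mul, mul_pow]; ring
    simp only [hsum, hint, filiformCoeffMatrix, of_apply, intervalIntegral.integral_const_mul]
    ring

theorem fderiv_filiformGamma_apply_zero (w d : Fin q → ℝ × ℝ) :
    fderiv ℝ (filiformGamma p q) w d 0 = ∑ j, (d j).1 := by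
  have h := hasFDerivAt_pi'.1 (differentiable_filiformGamma (p := p) w).hasFDerivAt 0
  simp only [filiformGamma_zero] at h
  let ℓ : (Fin q → ℝ × ℝ) →L[ℝ] ℝ :=
    ∑ j, (ContinuousLinearMap.fst ℝ ℝ ℝ).comp (ContinuousLinearMap.proj j)
  have hℓ : HasFDerivAt (fun x : Fin q → ℝ × ℝ => ∑ j, (x j).1) ℓ w := by
    convert ℓ.hasFDerivAt using 1
    ext x; simp [ℓ]
  simpa [ℓ] using congrArg (· d) (h.unique hℓ)

theorem fderiv_filiformGamma_const_apply_snd (ξ η : ℝ) (b : Fin q → ℝ) :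
    fderiv ℝ (filiformGamma p q) (fun _ => (ξ, η)) (fun j => (0, b j)) =
      Fin.cons 0 (filiformCoeffMatrix p q ξ *ᵥ b) := by
  refine fderiv_apply_eq_of_line differentiable_filiformGamma.differentiableAt fun t => ?_
  have hline : ((fun _ => (ξ, η)) + t • fun j => ((0 : ℝ), b j)) =
      fun j => (ξ, ((fun _ => η : Fin q → ℝ) + t • b) j) := by
    ext j <;> simp
  rw [hline, filiformGamma_const_fst, filiformGamma_const_fst]
  ext i
  induction i using Fin.cases with
  | zero => simp
  | succ k => simp [mulVec_add, mulVec_smul]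

end Filiform

theorem filiform_multiexponential_submersion_general (p : ℕ) (ξ η : ℝ) (hξ : ξ ≠ 0) :
    Function.Surjective
      ⇑(fderiv ℝ (filiformGamma p (p + 1)) (fun _ : Fin (p + 1) => ((ξ, η) : ℝ × ℝ))) := by
  refine LinearMap.surjective_of_cons_zero_mem_range (fderiv ℝ (filiformGamma p (p + 1))
    (fun _ : Fin (p + 1) => ((ξ, η) : ℝ × ℝ))).toLinearMap (fun z => ?_) (Pi.single 0 (1, 0)) ?_
  · obtain ⟨b, rfl⟩ := mulVec_surjective_iff_isUnit.2 (isUnit_filiformCoeffMatrix (p := p) hξ) z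
    exact ⟨fun j => (0, b j), fderiv_filiformGamma_const_apply_snd ξ η b⟩
  · simp [fderiv_filiformGamma_apply_zero, Pi.single_apply, apply_ite Prod.fst]

/-- If `p ≥ 1` and `ζ = (ξ, η)` with `ξ ≠ 0`, then the multiexponential
map `Γ^{(p+1)}` of the filiform group of step `p+1` is a submersion at `(ζ, …, ζ)`:
its Fréchet derivative there is surjective onto `ℝ^{p+2}`. -/
theorem filiform_multiexponential_submersion (p : ℕ) (hp : 1 ≤ p) (ξ η : ℝ) (hξ : ξ ≠ 0) :
    Function.Surjective
      ⇑(fderiv ℝ (filiformGamma p (p + 1)) (fun _ : Fin (p + 1) => ((ξ, η) : ℝ × ℝ))) :=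
  filiform_multiexponential_submersion_general p ξ η hξ
end

section
/- For every p ∈ ℕ, the (p+1)×(p+1) real matrix M with entries M_{i,j} = j^i − (j−1)^i, for i, j ∈ {1, …, p+1}, is invertible (its determinant is nonzero). -/
/-!
Subtracting from each column its predecessor is unimodular, and since `0 ^ (i + 1) = 0` it
telescopes the matrix `(j ^ (i + 1) - (j - 1) ^ (i + 1))` into `(j ^ (i + 1))`, which is a
Vandermonde matrix in the distinct nodes `1, …, p + 1` with its columns scaled by the nonzero
nodes.
-/

namespace Matrix

variable {R : Type*} [CommRing R]

theorem det_of_sub_succ {n : ℕ} (f : Fin (n + 1) → ℕ → R) (hf : ∀ i, f i 0 = 0) :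
    (of fun i j : Fin (n + 1) => f i ((j : ℕ) + 1) - f i j).det =
      (of fun i j : Fin (n + 1) => f i ((j : ℕ) + 1)).det := by
  refine (det_eq_of_forall_col_eq_smul_add_pred (fun _ => 1) (fun i => ?_) fun i j => ?_).symm
  · simp [hf]
  · simp only [of_apply, Fin.val_succ, Fin.val_castSucc]
    ring

theorem det_of_pow_succ {n : ℕ} (v : Fin n → R) :
    (of fun i j : Fin n => v j ^ ((i : ℕ) + 1)).det = (vandermonde v).det * ∏ j, v j := by
  have h : of (fun i j : Fin n => v j ^ ((i : ℕ) + 1)) = (vandermonde v)ᵀ * diagonal v := by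
    ext i j
    simp [vandermonde_apply, pow_succ]
  rw [h, det_mul, det_transpose, det_diagonal]

end Matrix

/-- For every `p ∈ ℕ`, the `(p+1) × (p+1)` real matrix with entries
`M_{i,j} = j^i − (j−1)^i` for `i, j ∈ {1, …, p+1}` (here indexed by `i, j : Fin (p+1)`,
so that the entry is `(j+1)^(i+1) − j^(i+1)`) has nonzero determinant, hence is
invertible. -/
theorem consecutive_power_difference_matrix_det_ne_zero (p : ℕ) :
    (Matrix.of fun i j : Fin (p + 1) =>
        (((j : ℕ) + 1 : ℝ)) ^ ((i : ℕ) + 1) - ((j : ℕ) : ℝ) ^ ((i : ℕ) + 1)).det ≠ 0 := by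
  set v : Fin (p + 1) → ℝ := fun j => (j : ℕ) + 1
  have hv : Function.Injective v := fun a b hab => Fin.ext (by simpa [v] using hab)
  have hM := Matrix.det_of_sub_succ (fun (i : Fin (p + 1)) (k : ℕ) => (k : ℝ) ^ ((i : ℕ) + 1))
    fun i => by simp
  push_cast at hM
  rw [hM, Matrix.det_of_pow_succ v]
  exact mul_ne_zero (Matrix.det_vandermonde_ne_zero_iff.mpr hv)
    (Finset.prod_ne_zero_iff.mpr fun j _ => by positivity)
end

section
/- Let p ∈ ℕ. Define Φ : ℝ^{p+2} → M_{(p+2)×(p+2)}(ℝ) by sending (x, y, t₁, …, t_p) to the lower-triangular unipotent matrix whose diagonal entries are 1, whose first column is (1, y, t₁, t₂, …, t_p)ᵀ, whose entry in row i and column j for 2 ≤ j ≤ i ≤ p+2 is x^{i−j}/(i−j)!, and whose entries above the diagonal are 0. Then for all a, b ∈ ℝ^{p+2}, Φ(a · b) = Φ(a) Φ(b), where a · b denotes the filiform group law. -/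
/-- The filiform group law on `ℝ^{p+2} = ℝ²_{x,y} × ℝ^p_t`:
`(x,y,t)·(ξ,η,τ) = (x+ξ, y+η, σ₁, …, σ_p)` where, for `k = 1, …, p` (the coordinate
`t_k` is stored at index `k+1`),
`σ_k = t_k + τ_k + (x^k/k!) η + Σ_{j=1}^{k-1} (x^{k−j}/(k−j)!) τ_j`. -/
noncomputable def filiformMul (p : ℕ) (a b : Fin (p + 2) → ℝ) : Fin (p + 2) → ℝ :=
  fun i =>
    if (i : ℕ) ≤ 1 then a i + b i
    else a i + b i + (a 0) ^ ((i : ℕ) - 1) / (Nat.factorial ((i : ℕ) - 1) : ℝ) * b 1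
      + ∑ j : Fin p,
          if (j : ℕ) + 3 ≤ (i : ℕ) then
            (a 0) ^ ((i : ℕ) - (j : ℕ) - 2) / (Nat.factorial ((i : ℕ) - (j : ℕ) - 2) : ℝ)
              * b ⟨(j : ℕ) + 2, by omega⟩
          else 0

/-- The map `Φ : ℝ^{p+2} → M_{(p+2)×(p+2)}(ℝ)` sending `(x, y, t₁, …, t_p)` to the
lower-triangular unipotent matrix whose first column is `(1, y, t₁, …, t_p)ᵀ` and whose
entry in row `i`, column `j` with `1 ≤ j ≤ i` (zero-based indexing) is `x^{i−j}/(i−j)!`,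
all entries above the diagonal being `0`. -/
noncomputable def filiformPhi (p : ℕ) (a : Fin (p + 2) → ℝ) : Matrix (Fin (p + 2)) (Fin (p + 2)) ℝ :=
  Matrix.of fun i j =>
    if (j : ℕ) = 0 then (if (i : ℕ) = 0 then 1 else a i)
    else if (j : ℕ) ≤ (i : ℕ) then
      (a 0) ^ ((i : ℕ) - (j : ℕ)) / (Nat.factorial ((i : ℕ) - (j : ℕ)) : ℝ)
    else 0

/-!
`Φ(a)` is a block matrix `[[1, 0], [t, E(x)]]`, with `t = (y, t₁, …, t_p)` and `E(x)` the lower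
triangular Toeplitz matrix with entries `x^m / m!` (that is, `exp (x N)` for the nilpotent shift `N`).
Block multiplication gives `Φ(a) Φ(b) = [[1, 0], [t + E(x) τ, E(x) E(ξ)]]`. Products of lower
triangular Toeplitz matrices are Toeplitz with the Cauchy product of the symbols, so
`E(x) E(ξ) = E(x + ξ)` by the binomial theorem, and the column `t + E(x) τ` is the filiform law.
-/

open Finset Matrix Nat

theorem add_pow_div_factorial {K : Type*} [Field K] [CharZero K] (x y : K) (n : ℕ) :
    (x + y) ^ n / n ! = ∑ kl ∈ antidiagonal n, x ^ kl.1 / kl.1 ! * (y ^ kl.2 / kl.2 !) := by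
  rw [(Commute.all x y).add_pow', sum_div]
  refine sum_congr rfl fun kl hkl => ?_
  obtain rfl := mem_antidiagonal.mp hkl
  rw [nsmul_eq_mul, Nat.cast_add_choose]
  have : ((kl.1 + kl.2)! : K) ≠ 0 := Nat.cast_ne_zero.mpr (factorial_ne_zero _)
  field_simp

section LowerToeplitz

variable {R : Type*} [Semiring R] {n : ℕ}

def lowerToeplitz (f : ℕ → R) : Matrix (Fin n) (Fin n) R :=
  of fun i j => if j ≤ i then f (i - j) else 0

theorem lowerToeplitz_mul (f g : ℕ → R) :
    (lowerToeplitz f * lowerToeplitz g : Matrix (Fin n) (Fin n) R) =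
      lowerToeplitz fun m => ∑ kl ∈ antidiagonal m, f kl.1 * g kl.2 := by
  ext i j
  simp only [mul_apply, lowerToeplitz, of_apply, ite_mul, zero_mul, mul_ite, mul_zero]
  split_ifs with hji
  · rw [← sum_filter, ← sum_filter]
    refine sum_bij' (fun k _ => ((i : ℕ) - k, (k : ℕ) - j))
      (fun kl hkl => ⟨j + kl.2, by have := mem_antidiagonal.mp hkl; omega⟩) ?_ ?_ ?_ ?_ ?_
    · intro k hk
      simp only [mem_filter, mem_univ, true_and] at hk
      exact mem_antidiagonal.mpr (by omega)
    · intro kl hkl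
      simp only [mem_filter, mem_univ, true_and, Fin.le_def]
      have := mem_antidiagonal.mp hkl; omega
    · intro k hk
      simp only [mem_filter, mem_univ, true_and] at hk
      ext; simp only; omega
    · intro kl hkl
      have := mem_antidiagonal.mp hkl
      ext <;> simp only <;> omega
    · exact fun _ _ => rfl
  · refine sum_eq_zero fun k _ => ?_
    split_ifs <;> first | rfl | exact absurd (le_trans ‹_› ‹_›) hji

theorem lowerToeplitz_apply_eq_add (f : ℕ → R) (i j : Fin n) :
    (lowerToeplitz f : Matrix (Fin n) (Fin n) R) i j =
      (if j = i then f 0 else 0) + if j < i then f (i - j) else 0 := by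
  rcases lt_trichotomy j i with h | rfl | h
  · simp [lowerToeplitz, h.le, h.ne, h]
  · simp [lowerToeplitz]
  · simp [lowerToeplitz, h.not_ge, h.ne', h.not_gt]

theorem lowerToeplitz_succ_succ (f : ℕ → R) (i j : Fin n) :
    (lowerToeplitz f : Matrix (Fin (n + 1)) (Fin (n + 1)) R) i.succ j.succ =
      lowerToeplitz f i j := by
  simp [lowerToeplitz]

end LowerToeplitz

theorem lowerToeplitz_pow_div_factorial_mul {K : Type*} [Field K] [CharZero K] {n : ℕ} (x y : K) :
    (lowerToeplitz (fun m => x ^ m / m !) * lowerToeplitz (fun m => y ^ m / m !) :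
      Matrix (Fin n) (Fin n) K) = lowerToeplitz fun m => (x + y) ^ m / m ! := by
  simp_rw [lowerToeplitz_mul, add_pow_div_factorial]

section Filiform

variable {p : ℕ} (a b : Fin (p + 2) → ℝ)

theorem filiformPhi_zero_zero : filiformPhi p a 0 0 = 1 := by
  simp [filiformPhi]

theorem filiformPhi_zero_succ (j : Fin (p + 1)) : filiformPhi p a 0 j.succ = 0 := by
  simp [filiformPhi]

theorem filiformPhi_succ_zero (i : Fin (p + 1)) : filiformPhi p a i.succ 0 = a i.succ := by
  simp [filiformPhi]

theorem filiformPhi_succ_succ (i j : Fin (p + 1)) :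
    filiformPhi p a i.succ j.succ = lowerToeplitz (fun m => a 0 ^ m / m !) i j := by
  simp only [filiformPhi, lowerToeplitz, of_apply, Fin.val_succ, Fin.le_def, add_eq_zero,
    one_ne_zero, and_false, if_false, add_le_add_iff_right, Nat.add_sub_add_right]

theorem filiformMul_zero : filiformMul p a b 0 = a 0 + b 0 := by
  simp [filiformMul]

theorem filiformMul_succ (i : Fin (p + 1)) :
    filiformMul p a b i.succ =
      a i.succ + (lowerToeplitz (fun m => a 0 ^ m / m !) *ᵥ Fin.tail b) i := by
  cases i using Fin.cases with
  | zero => simp [filiformMul, mulVec, dotProduct, lowerToeplitz, Fin.tail]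
  | succ i =>
    have hmul : filiformMul p a b i.succ.succ = a i.succ.succ + b i.succ.succ
        + a 0 ^ (i + 1 : ℕ) / (i + 1 : ℕ)! * b 1
        + ∑ j, if j < i then a 0 ^ (i - j : ℕ) / (i - j : ℕ)! * b j.succ.succ else 0 := by
      have hexp : ∀ j : Fin p, (i + 1 + 1 - j - 2 : ℕ) = i - j := fun j => by omega
      simp [filiformMul, hexp, Fin.succ]
    have hsum : ∑ j, lowerToeplitz (fun m => a 0 ^ m / m !) i j * b j.succ.succ =
        b i.succ.succ +
          ∑ j, if j < i then a 0 ^ (i - j : ℕ) / (i - j : ℕ)! * b j.succ.succ else 0 := by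
      simp [lowerToeplitz_apply_eq_add, add_mul, sum_add_distrib]
    rw [hmul, mulVec, dotProduct, Fin.sum_univ_succ]
    simp only [Fin.tail, lowerToeplitz_succ_succ, hsum]
    simp only [lowerToeplitz, of_apply, Fin.zero_le, if_true, Fin.val_succ, Fin.val_zero, tsub_zero,
      Fin.succ_zero_eq_one]
    ring

end Filiform

/-- `Φ` intertwines the filiform group law with matrix multiplication:
`Φ(a · b) = Φ(a) Φ(b)` for all `a, b ∈ ℝ^{p+2}`. -/
theorem filiform_matrix_representation (p : ℕ) (a b : Fin (p + 2) → ℝ) :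
    filiformPhi p (filiformMul p a b) = filiformPhi p a * filiformPhi p b := by
  ext i j
  rw [mul_apply, Fin.sum_univ_succ]
  cases i using Fin.cases with
  | zero => cases j using Fin.cases <;> simp [filiformPhi_zero_zero, filiformPhi_zero_succ]
  | succ i =>
    cases j using Fin.cases with
    | zero =>
      rw [filiformPhi_succ_zero, filiformPhi_succ_zero, filiformPhi_zero_zero, mul_one,
        filiformMul_succ]
      simp only [filiformPhi_succ_succ, filiformPhi_succ_zero, mulVec, dotProduct, Fin.tail]
    | succ j =>
      simp only [filiformPhi_succ_succ, filiformPhi_zero_succ, filiformMul_zero, mul_zero,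
        zero_add, ← lowerToeplitz_pow_div_factorial_mul, mul_apply]
end

section
/- Let p ∈ ℕ with p ≥ 2, let q ∈ ℕ with q ≥ 1, and let η ∈ ℝ. Then every vector in the range of the Fréchet derivative of the multiexponential map Γ^{(q)} : (ℝ²)^q → ℝ^{p+2} at the point ((0,η), (0,η), …, (0,η)) has its coordinates τ₂, τ₃, …, τ_p (i.e., the last p−1 coordinates of ℝ^{p+2}) equal to zero. In particular, this Fréchet derivative is not surjective, so Γ^{(q)} is not a submersion at ((0,η),…,(0,η)) for any q. (This is the necessity part of the theorem: in the filiform group, the direction Z = uX + vY admits a submersive multiexponential only if u ≠ 0.) -/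
open Finset

section Calculus

variable {𝕜 : Type*} [NontriviallyNormedField 𝕜]

theorem hasDerivAt_pow_mul_zero_of_two_le {k : ℕ} (hk : 2 ≤ k) {g : 𝕜 → 𝕜}
    (hg : DifferentiableAt 𝕜 g 0) : HasDerivAt (fun t => t ^ k * g t) 0 0 := by
  simpa [zero_pow (by omega : k - 1 ≠ 0), zero_pow (by omega : k ≠ 0)] using
    (hasDerivAt_pow k 0).fun_mul hg.hasDerivAt

variable {E F ι : Type*} [NormedAddCommGroup E] [NormedSpace 𝕜 E]
  [NormedAddCommGroup F] [NormedSpace 𝕜 F]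

/-- No differentiability is needed: where `f` is not differentiable, `fderiv 𝕜 f x = 0`. -/
theorem fderiv_apply_apply_eq_zero_of_hasLineDerivAt {f : E → ι → F} {x v : E} {i : ι}
    (h : HasLineDerivAt 𝕜 (fun y => f y i) 0 x v) : fderiv 𝕜 f x v i = 0 := by
  by_cases hf : DifferentiableAt 𝕜 f x
  · exact ((hasFDerivAt_pi'.1 hf.hasFDerivAt i).hasLineDerivAt v).unique h
  · simp [fderiv_zero_of_not_differentiableAt hf]

end Calculus

section Filiform

variable {p q : ℕ}

theorem filiformGamma_apply_of_two_le (w : Fin q → ℝ × ℝ) {i : Fin (p + 2)}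
    (hi : 2 ≤ (i : ℕ)) :
    filiformGamma p q w i = ∑ j, (w j).2 *
      ∫ s in (0:ℝ)..1,
        ((∑ i' ∈ univ.filter (fun i' => i' < j), (w i').1) + s * (w j).1)
            ^ ((i : ℕ) - 1) / (Nat.factorial ((i : ℕ) - 1) : ℝ) := by
  simp only [filiformGamma, if_neg (show (i : ℕ) ≠ 0 by omega),
    if_neg (show (i : ℕ) ≠ 1 by omega)]

theorem filiformGamma_smul_fst (w : Fin q → ℝ × ℝ) (t : ℝ) {i : Fin (p + 2)}
    (hi : 2 ≤ (i : ℕ)) :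
    filiformGamma p q (fun j => (t * (w j).1, (w j).2)) i
      = t ^ ((i : ℕ) - 1) * filiformGamma p q w i := by
  rw [filiformGamma_apply_of_two_le _ hi, filiformGamma_apply_of_two_le _ hi, mul_sum]
  refine sum_congr rfl fun j _ => ?_
  rw [mul_left_comm (t ^ _), ← intervalIntegral.integral_const_mul (t ^ _)]
  congr 1
  refine intervalIntegral.integral_congr fun s _ => ?_
  rw [← mul_div_assoc, ← mul_pow, mul_add, mul_sum, mul_left_comm t s]

theorem differentiable_filiformGamma_apply_snd (u : Fin q → ℝ) (i : Fin (p + 2)) :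
    Differentiable ℝ (fun v : Fin q → ℝ => filiformGamma p q (fun j => (u j, v j)) i) := by
  unfold filiformGamma
  split_ifs <;> dsimp only <;> fun_prop

theorem hasLineDerivAt_filiformGamma_apply_zero (η : ℝ) (h : Fin q → ℝ × ℝ)
    {i : Fin (p + 2)} (hi : 3 ≤ (i : ℕ)) :
    HasLineDerivAt ℝ (fun w => filiformGamma p q w i) 0 (fun _ => ((0 : ℝ), η)) h := by
  have hline : ∀ t : ℝ, (fun _ => ((0 : ℝ), η)) + t • h
      = fun j => (t * (h j).1, η + t * (h j).2) := fun t => by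
    ext j <;> simp
  have hg : DifferentiableAt ℝ
      (fun t : ℝ => filiformGamma p q (fun j => ((h j).1, η + t * (h j).2)) i) 0 :=
    ((differentiable_filiformGamma_apply_snd _ i).comp (by fun_prop) : Differentiable ℝ _) 0
  have hhom : ∀ t : ℝ, filiformGamma p q ((fun _ => ((0 : ℝ), η)) + t • h) i
      = t ^ ((i : ℕ) - 1) * filiformGamma p q (fun j => ((h j).1, η + t * (h j).2)) i :=
    fun t => by rw [hline, ← filiformGamma_smul_fst _ _ (by omega)]
  unfold HasLineDerivAt
  simpa only [hhom] using hasDerivAt_pow_mul_zero_of_two_le (by omega) hg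

end Filiform

theorem filiform_multiexponential_not_submersion_vertical_general (p q : ℕ) (hp : 2 ≤ p)
    (η : ℝ) :
    (∀ y ∈ Set.range ⇑(fderiv ℝ (filiformGamma p q) (fun _ : Fin q => (((0:ℝ), η) : ℝ × ℝ))),
        ∀ i : Fin (p + 2), 3 ≤ (i : ℕ) → y i = 0) ∧
      ¬ Function.Surjective
          ⇑(fderiv ℝ (filiformGamma p q) (fun _ : Fin q => (((0:ℝ), η) : ℝ × ℝ))) := by
  have hvert : ∀ y ∈ Set.range ⇑(fderiv ℝ (filiformGamma p q)
      (fun _ : Fin q => (((0:ℝ), η) : ℝ × ℝ))), ∀ i : Fin (p + 2), 3 ≤ (i : ℕ) → y i = 0 := by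
    rintro _ ⟨h, rfl⟩ i hi
    exact fderiv_apply_apply_eq_zero_of_hasLineDerivAt
      (hasLineDerivAt_filiformGamma_apply_zero η h hi)
  refine ⟨hvert, fun hsurj => ?_⟩
  obtain ⟨h, hh⟩ := hsurj fun _ => 1
  exact one_ne_zero (hh ▸ hvert _ ⟨h, rfl⟩ ⟨3, by omega⟩ le_rfl)

/-- Let `p ≥ 2`, `q ≥ 1` and `η ∈ ℝ`.  Every vector in the range of the
Fréchet derivative of `Γ^{(q)}` at the constant point `((0,η), …, (0,η))` has its
coordinates `τ₂, …, τ_p` (i.e. the coordinates of `ℝ^{p+2}` of index `≥ 3`) equal to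
zero; in particular this derivative is not surjective, so `Γ^{(q)}` is not a submersion
at `((0,η), …, (0,η))` for any `q`. -/
theorem filiform_multiexponential_not_submersion_vertical (p q : ℕ) (hp : 2 ≤ p)
    (hq : 1 ≤ q) (η : ℝ) :
    (∀ y ∈ Set.range ⇑(fderiv ℝ (filiformGamma p q) (fun _ : Fin q => (((0:ℝ), η) : ℝ × ℝ))),
        ∀ i : Fin (p + 2), 3 ≤ (i : ℕ) → y i = 0) ∧
      ¬ Function.Surjective
          ⇑(fderiv ℝ (filiformGamma p q) (fun _ : Fin q => (((0:ℝ), η) : ℝ × ℝ))) :=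
  filiform_multiexponential_not_submersion_vertical_general p q hp η
end

section
/- Let Q : ℝ^m × ℝ^m → ℝ^ℓ be bilinear and alternating, let p ∈ ℕ, and define G : (ℝ^m)^p → ℝ^m × ℝ^ℓ by G(u₁,…,u_p) = (Σ_{j=1}^p u_j, Σ_{1≤j<k≤p} Q(u_j, u_k)). Then for every ū ∈ ℝ^m, the Fréchet derivative of G at (ū, ū, …, ū) is the linear map (h₁,…,h_p) ↦ (Σ_{j=1}^p h_j, Q(ū, Σ_{j=1}^p (2j−p−1) h_j)). Consequently, if the linear map y ↦ Q(ū, y) from ℝ^m to ℝ^ℓ is not surjective, then for every p ∈ ℕ the Fréchet derivative of G at (ū,…,ū) is not surjective, i.e., the p-th multiexponential of the step-two group is not a submersion at (ū,…,ū). -/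
/-!
At a point `u`, the derivative of `(u₁,…,u_p) ↦ Σ_{j<k} Q(u_j, u_k)` in direction `h` is
`Σ_{j<k} (Q(u_j, h_k) + Q(h_j, u_k))`. On the diagonal `u_j = ū` skew-symmetry of `Q` turns
this into `Q(ū, Σ_{j<k} (h_k − h_j))`, and `h_j` occurs in that double sum `j − 1` times with
sign `+` and `p − j` times with sign `−`. Hence the second component of the derivative factors
through `Q(ū, ·)`, which therefore inherits surjectivity from the derivative.
-/

open Finset

theorem Fin.sum_sum_Ioi_sub_eq_sum_smul {R V : Type*} [Ring R] [AddCommGroup V] [Module R V]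
    {p : ℕ} (h : Fin p → V) :
    ∑ j, ∑ k ∈ Ioi j, (h k - h j) = ∑ j : Fin p, (2 * ((j : ℕ) : R) + 1 - p) • h j := by
  have upper : ∑ j, ∑ k ∈ Ioi j, h k = ∑ k : Fin p, ((k : ℕ) : R) • h k := by
    rw [Finset.sum_comm' (t' := univ) (s' := fun k => Iio k) (by simp)]
    simp [Nat.cast_smul_eq_nsmul]
  have lower : ∑ j, ∑ k ∈ Ioi j, h j = ∑ j : Fin p, ((p - 1 - j : ℕ) : R) • h j := by
    simp only [Finset.sum_const, Fin.card_Ioi, Nat.cast_smul_eq_nsmul]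
  simp only [Finset.sum_sub_distrib]
  rw [upper, lower, ← Finset.sum_sub_distrib]
  refine Finset.sum_congr rfl fun ⟨j, hj⟩ _ => ?_
  rw [← sub_smul, Nat.cast_sub (by omega : j ≤ p - 1), Nat.cast_sub (by omega : 1 ≤ p)]
  congr 1
  push_cast
  noncomm_ring

section Multiexp

variable {𝕜 E F : Type*} [NontriviallyNormedField 𝕜] [CompleteSpace 𝕜]
  [NormedAddCommGroup E] [NormedSpace 𝕜 E] [FiniteDimensional 𝕜 E]
  [NormedAddCommGroup F] [NormedSpace 𝕜 F]

def multiexp (Q : E →ₗ[𝕜] E →ₗ[𝕜] F) (p : ℕ) (u : Fin p → E) : E × F :=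
  (∑ j, u j, ∑ j, ∑ k ∈ Ioi j, Q (u j) (u k))

variable (Q : E →ₗ[𝕜] E →ₗ[𝕜] F) {p : ℕ}

theorem hasFDerivAt_multiexp (u : Fin p → E) :
    HasFDerivAt (multiexp Q p)
      ((∑ j, ContinuousLinearMap.proj j).prod
        (∑ j, ∑ k ∈ Ioi j,
          (Q.toContinuousBilinearMap.precompR _ (u j) (ContinuousLinearMap.proj k) +
            Q.toContinuousBilinearMap.precompL _ (ContinuousLinearMap.proj j) (u k)))) u := by
  refine (HasFDerivAt.fun_sum fun j _ => ?_).prodMk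
    (HasFDerivAt.fun_sum fun j _ => HasFDerivAt.fun_sum fun k _ => ?_)
  · exact hasFDerivAt_apply j u
  · exact Q.toContinuousBilinearMap.hasFDerivAt_of_bilinear (hasFDerivAt_apply j u)
      (hasFDerivAt_apply k u)

theorem fderiv_multiexp_apply (u h : Fin p → E) :
    fderiv 𝕜 (multiexp Q p) u h =
      (∑ j, h j, ∑ j, ∑ k ∈ Ioi j, (Q (u j) (h k) + Q (h j) (u k))) := by
  simp [(hasFDerivAt_multiexp Q u).fderiv]

variable {Q}

theorem fderiv_multiexp_const_apply (hQ : Q.IsAlt) (ub : E) (h : Fin p → E) :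
    fderiv 𝕜 (multiexp Q p) (fun _ => ub) h =
      (∑ j, h j, Q ub (∑ j : Fin p, (2 * ((j : ℕ) : 𝕜) + 1 - p) • h j)) := by
  rw [fderiv_multiexp_apply, ← Fin.sum_sum_Ioi_sub_eq_sum_smul]
  simp only [map_sum, map_add, map_neg, ← hQ.neg ub, sub_eq_add_neg]

theorem not_surjective_fderiv_multiexp_const (hQ : Q.IsAlt) {ub : E}
    (hns : ¬ Function.Surjective (Q ub)) :
    ¬ Function.Surjective (fderiv 𝕜 (multiexp Q p) (fun _ => ub)) := by
  refine fun hs => hns fun y => ?_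
  obtain ⟨h, hh⟩ := hs (0, y)
  rw [fderiv_multiexp_const_apply hQ] at hh
  exact ⟨_, congrArg Prod.snd hh⟩

end Multiexp

/-- Let `Q : ℝ^m × ℝ^m → ℝ^ℓ` be bilinear and alternating, and let
`G(u₁,…,u_p) = (Σ_j u_j, Σ_{j<k} Q(u_j, u_k))` be the `p`-th multiexponential of the
associated step-two Carnot group.  Then for every `ū ∈ ℝ^m`, the Fréchet derivative of
`G` at `(ū, …, ū)` is `(h₁,…,h_p) ↦ (Σ_j h_j, Q(ū, Σ_j (2j−p−1) h_j))` (with `1`-based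
index `j`; below `j : Fin p` is `0`-based, so the coefficient reads `2j+1−p`).
Consequently, if `y ↦ Q(ū, y)` is not surjective, then this Fréchet derivative is not
surjective either, i.e. the `p`-th multiexponential is not a submersion at `(ū,…,ū)`. -/
theorem step_two_multiexponential_derivative (m l p : ℕ)
    (Q : (Fin m → ℝ) →ₗ[ℝ] (Fin m → ℝ) →ₗ[ℝ] (Fin l → ℝ))
    (hQ : ∀ z, Q z z = 0)
    (G : (Fin p → Fin m → ℝ) → (Fin m → ℝ) × (Fin l → ℝ))
    (hG : ∀ u, G u = (∑ j, u j, ∑ j : Fin p, ∑ k ∈ Finset.Ioi j, Q (u j) (u k)))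
    (ub : Fin m → ℝ) :
    (∀ h : Fin p → Fin m → ℝ,
        fderiv ℝ G (fun _ => ub) h
          = (∑ j, h j, Q ub (∑ j : Fin p, ((2 * ((j : ℕ) : ℝ) + 1 - p) • h j)))) ∧
      (¬ Function.Surjective ⇑(Q ub) →
        ¬ Function.Surjective ⇑(fderiv ℝ G (fun _ => ub))) := by
  obtain rfl : G = multiexp Q p := funext hG
  exact ⟨fderiv_multiexp_const_apply hQ ub, not_surjective_fderiv_multiexp_const hQ⟩
end

section
/- Let Q : ℝ^m × ℝ^m → ℝ^ℓ be bilinear and alternating, and assume span{Q(e_j, e_k) : 1 ≤ j < k ≤ m} = ℝ^ℓ. Then there exist p ∈ ℕ and C > 0 such that for every ξ ∈ ℝ^m and every (z, t) ∈ ℝ^m × ℝ^ℓ, there exist u₁, …, u_p ∈ ℝ^m satisfying: (i) Σ_{j=1}^p u_j = z; (ii) Q(Σ_{j=1}^p (p−2j+1) u_j, ξ) + Σ_{1≤j<k≤p} Q(u_j, u_k) = t + Q(pξ, z); and (iii) Σ_{j=1}^p |u_j| ≤ C(|z| + |t|^{1/2}). (The constants p and C are independent of ξ, z, t.) -/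
/-!
Read `u : Fin p → ℝ^m` as the product `(u₀, 0) ⋯ (u_{p-1}, 0)` in the step-two group: its
vertical part is `pairSum Q u = ∑_{j<k} Q (u j) (u k)`. Expanding `t` along the spanning family
`Q (e_j, e_k)` gives coefficients `c = O(|t|)`, and each term `c • Q (e_j, e_k)` is produced by an
8-letter word with zero sum and zero moment `∑ j • u_j` whose letters have size `O(√|c|)`.
Prepending two multiples of `z` then makes the sum `z` and the moment `(p - 1/2) z`, and for these
values the `ξ`-term of the system collapses to `Q (p ξ, z)`.
-/

open Finset

theorem Real.exists_mul_eq_abs_add_abs_le (τ : ℝ) :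
    ∃ r s : ℝ, r * s = τ ∧ |r| + |s| ≤ 2 * √|τ| := by
  refine ⟨τ / √|τ|, √|τ|, ?_, ?_⟩
  · rcases eq_or_ne τ 0 with rfl | hτ
    · simp
    · exact div_mul_cancel₀ τ (Real.sqrt_ne_zero'.2 (abs_pos.2 hτ))
  · rw [abs_div, abs_of_nonneg (Real.sqrt_nonneg _), Real.div_sqrt]
    linarith

theorem exists_bounded_coeffs_of_span_eq_top {F ι : Type*} [NormedAddCommGroup F] [NormedSpace ℝ F]
    [FiniteDimensional ℝ F] [Fintype ι] (g : ι → F) (hg : Submodule.span ℝ (Set.range g) = ⊤) :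
    ∃ K : ℝ, ∀ t : F, ∃ c : ι → ℝ, ∑ i, c i • g i = t ∧ ∀ i, |c i| ≤ K * ‖t‖ := by
  obtain ⟨R, hR⟩ := (Fintype.linearCombination ℝ g).exists_rightInverse_of_surjective
    (by rwa [Fintype.range_linearCombination])
  refine ⟨‖LinearMap.toContinuousLinearMap R‖, fun t => ⟨R t, congr($hR t), fun i => ?_⟩⟩
  calc |R t i| ≤ ‖R t‖ := norm_le_pi_norm (R t) i
    _ ≤ ‖LinearMap.toContinuousLinearMap R‖ * ‖t‖ :=
      (LinearMap.toContinuousLinearMap R).le_opNorm t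

theorem LinearMap.exists_sum_apply_eq_and_sum_norm_le {E F ι : Type*} [SeminormedAddCommGroup E]
    [NormedSpace ℝ E] [NormedAddCommGroup F] [NormedSpace ℝ F] [FiniteDimensional ℝ F]
    [Fintype ι] (B : E →ₗ[ℝ] E →ₗ[ℝ] F) (v w : ι → E)
    (hspan : Submodule.span ℝ (Set.range fun i => B (v i) (w i)) = ⊤) :
    ∃ K : ℝ, ∀ t : F, ∃ a b : ι → E,
      ∑ i, B (a i) (b i) = t ∧ ∑ i, (‖a i‖ + ‖b i‖) ≤ K * √‖t‖ := by
  obtain ⟨K, hK⟩ := exists_bounded_coeffs_of_span_eq_top _ hspan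
  refine ⟨2 * √K * ∑ i, (‖v i‖ + ‖w i‖), fun t => ?_⟩
  obtain ⟨c, hc_sum, hc_le⟩ := hK t
  choose r s hrs hrs_le using fun i => Real.exists_mul_eq_abs_add_abs_le (c i)
  refine ⟨fun i => r i • v i, fun i => s i • w i, ?_, ?_⟩
  · simp only [map_smul, LinearMap.smul_apply, smul_smul, mul_comm (s _), hrs, hc_sum]
  · rw [mul_sum, sum_mul]
    refine sum_le_sum fun i _ => ?_
    have hsqrt : √|c i| ≤ √K * √‖t‖ := by
      rw [← Real.sqrt_mul' K (norm_nonneg t)]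
      exact Real.sqrt_le_sqrt (hc_le i)
    calc ‖r i • v i‖ + ‖s i • w i‖ ≤ (|r i| + |s i|) * (‖v i‖ + ‖w i‖) := by
          simp only [norm_smul, Real.norm_eq_abs]
          nlinarith [abs_nonneg (r i), abs_nonneg (s i), norm_nonneg (v i), norm_nonneg (w i)]
      _ ≤ (2 * (√K * √‖t‖)) * (‖v i‖ + ‖w i‖) := by
          gcongr
          exact (hrs_le i).trans (by gcongr)
      _ = _ := by ring

theorem Fin.sum_comp_append {α M : Type*} [AddCommMonoid M] {p q : ℕ} (f : α → M)
    (u : Fin p → α) (v : Fin q → α) :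
    ∑ j, f (Fin.append u v j) = ∑ j, f (u j) + ∑ k, f (v k) := by
  simp [Fin.sum_univ_add]

theorem Fin.sum_append {M : Type*} [AddCommMonoid M] {p q : ℕ} (u : Fin p → M) (v : Fin q → M) :
    ∑ j, Fin.append u v j = ∑ j, u j + ∑ k, v k :=
  Fin.sum_comp_append id u v

namespace Word

section AddCommGroup

variable {E : Type*} [AddCommGroup E]

def mirror {q : ℕ} (w : Fin q → E) : Fin (q + q) → E :=
  Fin.append w (-w)

theorem sum_mirror {q : ℕ} (w : Fin q → E) : ∑ j, mirror w j = 0 := by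
  simp [mirror, Fin.sum_append]

end AddCommGroup

section Module

variable {E F : Type*} [AddCommGroup E] [Module ℝ E] [AddCommGroup F] [Module ℝ F]

def pairSum (B : E →ₗ[ℝ] E →ₗ[ℝ] F) {p : ℕ} (u : Fin p → E) : F :=
  ∑ j, ∑ k ∈ Ioi j, B (u j) (u k)

def moment {p : ℕ} (u : Fin p → E) : E :=
  ∑ j : Fin p, ((j : ℕ) : ℝ) • u j

variable (B : E →ₗ[ℝ] E →ₗ[ℝ] F)

theorem pairSum_eq_sum_ite {p : ℕ} (u : Fin p → E) :
    pairSum B u = ∑ j, ∑ k, if j < k then B (u j) (u k) else 0 := by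
  simp only [pairSum, ← sum_filter, filter_lt_eq_Ioi]

theorem pairSum_append {p q : ℕ} (u : Fin p → E) (v : Fin q → E) :
    pairSum B (Fin.append u v) = pairSum B u + pairSum B v + B (∑ j, u j) (∑ k, v k) := by
  have castAdd_lt_castAdd_iff (i j : Fin p) : Fin.castAdd q i < Fin.castAdd q j ↔ i < j := by
    simp only [Fin.lt_def, Fin.val_castAdd]
  have castAdd_lt_natAdd (i : Fin p) (j : Fin q) : Fin.castAdd q i < Fin.natAdd p j := by
    rw [Fin.lt_def]; simp; omega
  have not_natAdd_lt_castAdd (i : Fin q) (j : Fin p) : ¬ Fin.natAdd p i < Fin.castAdd q j := by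
    rw [Fin.lt_def]; simp; omega
  simp only [pairSum_eq_sum_ite, Fin.sum_univ_add, Fin.append_left, Fin.append_right,
    castAdd_lt_castAdd_iff, Fin.natAdd_lt_natAdd_iff, castAdd_lt_natAdd,
    not_natAdd_lt_castAdd, if_true, if_false, sum_const_zero, add_zero, map_sum,
    LinearMap.sum_apply, sum_add_distrib]
  rw [sum_comm (f := fun j i => B (u i) (v j))]
  abel

theorem pairSum_neg {p : ℕ} (u : Fin p → E) : pairSum B (-u) = pairSum B u := by
  simp [pairSum]

theorem pairSum_pair (a b : E) : pairSum B ![a, b] = B a b := by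
  simp [pairSum_eq_sum_ite, Fin.sum_univ_two]

theorem moment_append {p q : ℕ} (u : Fin p → E) (v : Fin q → E) :
    moment (Fin.append u v) = moment u + (p : ℝ) • ∑ k, v k + moment v := by
  simp [moment, Fin.sum_univ_add, add_smul, sum_add_distrib, smul_sum, add_assoc]

theorem moment_neg {p : ℕ} (u : Fin p → E) : moment (-u) = -moment u := by
  simp [moment]

theorem moment_pair (a b : E) : moment ![a, b] = b := by
  simp [moment]

theorem moment_mirror {q : ℕ} (w : Fin q → E) : moment (mirror w) = -(q : ℝ) • ∑ j, w j := by
  simp [mirror, moment_append, moment_neg, neg_smul]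

theorem pairSum_mirror (hB : B.IsAlt) {q : ℕ} (w : Fin q → E) :
    pairSum B (mirror w) = (2 : ℝ) • pairSum B w := by
  simp only [mirror, pairSum_append, pairSum_neg, Pi.neg_apply, sum_neg_distrib, map_neg,
    hB.self_eq_zero, neg_zero, add_zero, two_smul]

theorem sum_centered_smul_eq {p : ℕ} (u : Fin p → E) :
    ∑ j : Fin p, ((p : ℝ) - 2 * ((j : ℕ) : ℝ) - 1) • u j
      = ((p : ℝ) - 1) • ∑ j, u j - (2 : ℝ) • moment u := by
  simp only [moment, smul_sum, ← sum_sub_distrib, smul_smul, ← sub_smul]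
  congr! 2
  ring

end Module

section Norm

variable {E F : Type*} [SeminormedAddCommGroup E]

theorem sum_norm_mirror {q : ℕ} (w : Fin q → E) :
    ∑ j, ‖mirror w j‖ = 2 * ∑ j, ‖w j‖ := by
  simp [mirror, Fin.sum_comp_append fun x => ‖x‖, two_mul]

variable [NormedSpace ℝ E] [AddCommGroup F] [Module ℝ F] (B : E →ₗ[ℝ] E →ₗ[ℝ] F)

/-- The word is `a, b, -a, -b, -a, -b, a, b` scaled by `1/2`: mirroring kills the sum, and
mirroring a word of sum zero kills its moment. -/
theorem exists_balanced_block (hB : B.IsAlt) (a b : E) :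
    ∃ u : Fin 8 → E, ∑ j, u j = 0 ∧ moment u = 0 ∧ pairSum B u = B a b ∧
      ∑ j, ‖u j‖ = 2 * (‖a‖ + ‖b‖) := by
  let d := ![(2⁻¹ : ℝ) • a, (2⁻¹ : ℝ) • b]
  refine ⟨mirror (mirror d), sum_mirror (mirror d), ?_, ?_, ?_⟩
  · rw [moment_mirror, sum_mirror d, smul_zero]
  · rw [pairSum_mirror B hB, pairSum_mirror B hB, pairSum_pair, map_smul, map_smul,
      LinearMap.smul_apply, smul_smul, smul_smul, smul_smul]
    norm_num
  · refine (sum_norm_mirror (mirror d)).trans ?_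
    rw [sum_norm_mirror d]
    simp [d, Fin.sum_univ_two, norm_smul]
    ring

theorem exists_balanced_word (hB : B.IsAlt) (N : ℕ) (a b : Fin N → E) :
    ∃ u : Fin (8 * N) → E, ∑ j, u j = 0 ∧ moment u = 0 ∧
      pairSum B u = ∑ i, B (a i) (b i) ∧ ∑ j, ‖u j‖ = 2 * ∑ i, (‖a i‖ + ‖b i‖) := by
  induction N with
  | zero => exact ⟨![], by simp, by simp [moment], by simp [pairSum], by simp⟩
  | succ N ih =>
    obtain ⟨u, hu_sum, hu_moment, hu_pair, hu_norm⟩ :=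
      ih (fun i => a i.castSucc) (fun i => b i.castSucc)
    obtain ⟨v, hv_sum, hv_moment, hv_pair, hv_norm⟩ :=
      exists_balanced_block B hB (a (Fin.last N)) (b (Fin.last N))
    show ∃ u : Fin (8 * N + 8) → E, _
    refine ⟨Fin.append u v, ?_, ?_, ?_, ?_⟩
    · refine (Fin.sum_append u v).trans ?_
      rw [hu_sum, hv_sum, add_zero]
    · rw [moment_append, hu_moment, hv_moment, hv_sum, smul_zero, add_zero, add_zero]
    · rw [pairSum_append, hu_pair, hv_pair, hu_sum, LinearMap.map_zero₂, add_zero,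
        Fin.sum_univ_castSucc]
    · refine (Fin.sum_comp_append (‖·‖) u v).trans ?_
      rw [hu_norm, hv_norm, Fin.sum_univ_castSucc]
      ring

/-- The word is `(1 - α) z, α z, w` with `α = p - 1/2`, so that the centered sum
`(p - 1) z - 2 α z` equals `-p z`. -/
theorem exists_prepend_pair (hB : B.IsAlt) {q : ℕ} (w : Fin q → E) (hw_sum : ∑ j, w j = 0)
    (hw_moment : moment w = 0) (z : E) :
    ∃ u : Fin (2 + q) → E, ∑ j, u j = z ∧
      (∀ ξ, B (∑ j : Fin (2 + q), (((2 + q : ℕ) : ℝ) - 2 * ((j : ℕ) : ℝ) - 1) • u j) ξ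
          + pairSum B u = pairSum B w + B (((2 + q : ℕ) : ℝ) • ξ) z) ∧
      ∑ j, ‖u j‖ ≤ 2 * (2 + q : ℕ) * ‖z‖ + ∑ j, ‖w j‖ := by
  set P : ℝ := ((2 + q : ℕ) : ℝ)
  set α : ℝ := P - 1 / 2 with hα
  have hP : 2 ≤ P := by simp [P]
  have hu_sum : ∑ j, Fin.append ![(1 - α) • z, α • z] w j = z := by
    rw [Fin.sum_append, hw_sum, Fin.sum_univ_two]
    simp [← add_smul]
  refine ⟨Fin.append ![(1 - α) • z, α • z] w, hu_sum, fun ξ => ?_, ?_⟩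
  · have hcoeff : ∑ j : Fin (2 + q),
        (P - 2 * ((j : ℕ) : ℝ) - 1) • Fin.append ![(1 - α) • z, α • z] w j = -P • z := by
      rw [sum_centered_smul_eq, hu_sum, moment_append, moment_pair, hw_sum, hw_moment]
      simp only [smul_zero, add_zero, smul_smul, ← sub_smul]
      congr 1
      ring
    rw [hcoeff, pairSum_append, pairSum_pair, hw_sum, map_zero]
    simp only [map_smul, LinearMap.smul_apply, hB.self_eq_zero, smul_zero, zero_add, add_zero,
      neg_smul, map_neg, LinearMap.neg_apply, ← hB.neg ξ z]
    module
  · rw [Fin.sum_comp_append (‖·‖), Fin.sum_univ_two]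
    simp only [Matrix.cons_val_zero, Matrix.cons_val_one, Matrix.cons_val_fin_one, norm_smul,
      Real.norm_eq_abs]
    have habs : |1 - α| + |α| ≤ 2 * P := by
      rw [abs_of_nonpos (by rw [hα]; linarith), abs_of_nonneg (by rw [hα]; linarith), hα]
      linarith
    nlinarith [norm_nonneg z]

end Norm

end Word

open Word in
theorem LinearMap.IsAlt.exists_word_solving {E F ι : Type*} [SeminormedAddCommGroup E]
    [NormedSpace ℝ E] [NormedAddCommGroup F] [NormedSpace ℝ F] [FiniteDimensional ℝ F]
    [Fintype ι] {B : E →ₗ[ℝ] E →ₗ[ℝ] F} (hB : B.IsAlt) (v w : ι → E)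
    (hspan : Submodule.span ℝ (Set.range fun i => B (v i) (w i)) = ⊤) :
    ∃ (p : ℕ) (C : ℝ), 0 < C ∧ ∀ (ξ z : E) (t : F), ∃ u : Fin p → E,
      ∑ j, u j = z ∧
      B (∑ j : Fin p, (((p : ℝ) - 2 * ((j : ℕ) : ℝ) - 1) • u j)) ξ + pairSum B u
        = t + B ((p : ℝ) • ξ) z ∧
      ∑ j, ‖u j‖ ≤ C * (‖z‖ + √‖t‖) := by
  obtain ⟨K, hK⟩ := B.exists_sum_apply_eq_and_sum_norm_le v w hspan
  set N := Fintype.card ι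
  let e := (Fintype.equivFin ι).symm
  refine ⟨2 + 8 * N, 2 * (2 + 8 * N : ℕ) + 2 * |K|, by positivity, fun ξ z t => ?_⟩
  obtain ⟨a, b, hab_sum, hab_norm⟩ := hK t
  obtain ⟨w', hw_sum, hw_moment, hw_pair, hw_norm⟩ :=
    exists_balanced_word B hB N (fun i => a (e i)) (fun i => b (e i))
  obtain ⟨u, hu_sum, hu_eq, hu_norm⟩ := exists_prepend_pair B hB w' hw_sum hw_moment z
  refine ⟨u, hu_sum, ?_, ?_⟩
  · rw [hu_eq, hw_pair, e.sum_comp (fun i => B (a i) (b i)), hab_sum]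
  · rw [hw_norm, e.sum_comp (fun i => ‖a i‖ + ‖b i‖)] at hu_norm
    have hK_abs := mul_le_mul_of_nonneg_right (le_abs_self K) (Real.sqrt_nonneg ‖t‖)
    have hKz := mul_nonneg (abs_nonneg K) (norm_nonneg z)
    have hNt := mul_nonneg (Nat.cast_nonneg (α := ℝ) (2 + 8 * N)) (Real.sqrt_nonneg ‖t‖)
    linarith

/-- Let `Q : ℝ^m × ℝ^m → ℝ^ℓ` be bilinear, alternating, and satisfy
the Hörmander condition `span{Q(e_j, e_k) : j < k} = ℝ^ℓ`.  Then there exist `p ∈ ℕ`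
and `C > 0` such that for every `ξ ∈ ℝ^m` and every `(z,t) ∈ ℝ^m × ℝ^ℓ`, the system
`Σ_j u_j = z`, `Q(Σ_j (p−2j+1) u_j, ξ) + Σ_{j<k} Q(u_j, u_k) = t + Q(pξ, z)` has a
solution `u₁, …, u_p` with `Σ_j |u_j| ≤ C(|z| + |t|^{1/2})` (Euclidean norms; the
`1`-based coefficient `p−2j+1` reads `p−2j−1` for `0`-based `j : Fin p`). -/
theorem step_two_system_solvable_with_xi (m l : ℕ)
    (Q : EuclideanSpace ℝ (Fin m) →ₗ[ℝ] EuclideanSpace ℝ (Fin m) →ₗ[ℝ] EuclideanSpace ℝ (Fin l))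
    (hQ : ∀ z, Q z z = 0)
    (hspan : Submodule.span ℝ {x : EuclideanSpace ℝ (Fin l) |
        ∃ j k : Fin m, j < k ∧
          x = Q (EuclideanSpace.single j 1) (EuclideanSpace.single k 1)} = ⊤) :
    ∃ (p : ℕ) (C : ℝ), 0 < C ∧
      ∀ (ξ z : EuclideanSpace ℝ (Fin m)) (t : EuclideanSpace ℝ (Fin l)),
        ∃ u : Fin p → EuclideanSpace ℝ (Fin m),
          (∑ j, u j) = z ∧
          Q (∑ j : Fin p, (((p : ℝ) - 2 * ((j : ℕ) : ℝ) - 1) • u j)) ξ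
              + ∑ j : Fin p, ∑ k ∈ Finset.Ioi j, Q (u j) (u k)
            = t + Q ((p : ℝ) • ξ) z ∧
          ∑ j, ‖u j‖ ≤ C * (‖z‖ + Real.sqrt ‖t‖) := by
  have hspan' : Submodule.span ℝ (Set.range fun jk : Fin m × Fin m =>
      Q (EuclideanSpace.single jk.1 1) (EuclideanSpace.single jk.2 1)) = ⊤ :=
    eq_top_iff.2 <| hspan.ge.trans <| Submodule.span_mono <| by
      rintro x ⟨j, k, -, rfl⟩
      exact ⟨(j, k), rfl⟩
  exact LinearMap.IsAlt.exists_word_solving (B := Q) hQ _ _ hspan'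
end

section
/- Let Q : ℝ^m × ℝ^m → ℝ^ℓ be bilinear and alternating, and assume span{Q(e_j, e_k) : 1 ≤ j < k ≤ m} = ℝ^ℓ. Then there exist p ∈ ℕ and C > 0 such that for every (z, t) ∈ ℝ^m × ℝ^ℓ, the system Σ_{j=1}^p u_j = z, Σ_{j=1}^p (p−2j+1) u_j = −p z, Σ_{1≤j<k≤p} Q(u_j, u_k) = t has a solution u₁, …, u_p ∈ ℝ^m with Σ_{j=1}^p |u_j| ≤ C(|z| + |t|^{1/2}). -/
/-!
Think of `u₁, …, u_p` as horizontal steps in the step-two group on `ℝ^m × ℝ^ℓ` with law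
`(z, t) (z', t') = (z + z', t + t' + Q(z, z'))`: the product of the steps is
`(Σ u_j, Σ_{j<k} Q(u_j, u_k))`. Given `Σ u_j = z`, the middle equation says
`2 Σ_j j u_j = (2p - 1) z` (0-based `j`).

The word `x y x⁻¹ y⁻¹ x⁻¹ y⁻¹ x y` has horizontal part `0`, first moment `Σ j u_j = 0` and
vertical part `4 Q(x, y)`, and these three quantities add up under concatenation of such words.
By the Hörmander condition, `t = Σ_i c_i Q(e_{j_i}, e_{k_i})` with `|c_i| ≲ |t|`; writing
`c_i / 4 = α_i β_i` with `|α_i| = |β_i| = √|c_i / 4|` and concatenating the words for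
`x = α_i e_{j_i}`, `y = β_i e_{k_i}` realises `t` with total length `≲ √|t|`. Two multiples of
`z` placed in front then fix both linear equations at cost `≲ |z|`.
-/

open Finset

namespace List

lemma exists_ofFn_eq {α : Type*} {n : ℕ} (L : List α) (h : L.length = n) :
    ∃ u : Fin n → α, ofFn u = L := by
  subst h
  exact ⟨_, ofFn_getElem⟩

section AddCommMonoid

variable {R E F : Type*} [CommSemiring R] [AddCommMonoid E] [Module R E] [AddCommMonoid F]
  [Module R F]

def moment : List E → E
  | [] => 0
  | _ :: L => L.sum + L.moment

def pairSum (Q : E →ₗ[R] E →ₗ[R] F) : List E → F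
  | [] => 0
  | a :: L => Q a L.sum + L.pairSum Q

@[simp] lemma moment_nil : ([] : List E).moment = 0 := rfl

@[simp] lemma moment_cons (a : E) (L : List E) : (a :: L).moment = L.sum + L.moment := rfl

@[simp] lemma pairSum_nil (Q : E →ₗ[R] E →ₗ[R] F) : ([] : List E).pairSum Q = 0 := rfl

@[simp] lemma pairSum_cons (Q : E →ₗ[R] E →ₗ[R] F) (a : E) (L : List E) :
    (a :: L).pairSum Q = Q a L.sum + L.pairSum Q := rfl

lemma moment_append (L₁ L₂ : List E) :
    (L₁ ++ L₂).moment = L₁.moment + L₂.moment + L₁.length • L₂.sum := by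
  induction L₁ with
  | nil => simp
  | cons a L ih => simp only [cons_append, moment_cons, ih, sum_append, length_cons]; module

lemma pairSum_append (Q : E →ₗ[R] E →ₗ[R] F) (L₁ L₂ : List E) :
    (L₁ ++ L₂).pairSum Q = L₁.pairSum Q + L₂.pairSum Q + Q L₁.sum L₂.sum := by
  induction L₁ with
  | nil => simp
  | cons a L ih => simp only [cons_append, pairSum_cons, ih, sum_append, sum_cons, map_add,
      LinearMap.add_apply]; abel

lemma moment_ofFn {n : ℕ} (u : Fin n → E) : (ofFn u).moment = ∑ j : Fin n, (j : ℕ) • u j := by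
  induction n with
  | zero => simp
  | succ n ih =>
    simp only [ofFn_succ, moment_cons, ih, sum_ofFn, Fin.sum_univ_succ, Fin.val_zero, zero_smul,
      Fin.val_succ, succ_nsmul, Finset.sum_add_distrib, zero_add]
    abel

lemma pairSum_ofFn (Q : E →ₗ[R] E →ₗ[R] F) {n : ℕ} (u : Fin n → E) :
    (ofFn u).pairSum Q = ∑ j, ∑ k ∈ Ioi j, Q (u j) (u k) := by
  induction n with
  | zero => simp
  | succ n ih =>
    simp only [ofFn_succ, pairSum_cons, ih, sum_ofFn, Fin.sum_univ_succ, Fin.sum_Ioi_zero,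
      Fin.sum_Ioi_succ, map_sum]

end AddCommMonoid

section AddCommGroup

variable {R E F : Type*} [CommRing R] [AddCommGroup E] [Module R E] [AddCommGroup F] [Module R F]

lemma sum_sub_mul_smul_eq_sub_smul_moment {n : ℕ} (u : Fin n → E) (a b : R) :
    ∑ j : Fin n, (a - b * j) • u j = a • (ofFn u).sum - b • (ofFn u).moment := by
  rw [sum_ofFn, moment_ofFn, Finset.smul_sum, Finset.smul_sum, ← Finset.sum_sub_distrib]
  refine Finset.sum_congr rfl fun j _ => ?_
  rw [sub_smul, ← Nat.cast_smul_eq_nsmul R, smul_smul]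

def commutatorWord (x y : E) : List E := [x, y, -x, -y, -x, -y, x, y]

@[simp] lemma length_commutatorWord (x y : E) : (commutatorWord x y).length = 8 := rfl

@[simp] lemma sum_commutatorWord (x y : E) : (commutatorWord x y).sum = 0 := by
  simp only [commutatorWord, sum_cons, sum_nil]; abel

@[simp] lemma moment_commutatorWord (x y : E) : (commutatorWord x y).moment = 0 := by
  simp only [commutatorWord, moment_cons, moment_nil, sum_cons, sum_nil]; abel

lemma pairSum_commutatorWord {Q : E →ₗ[R] E →ₗ[R] F} (hQ : Q.IsAlt) (x y : E) :
    (commutatorWord x y).pairSum Q = 4 • Q x y := by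
  simp only [commutatorWord, pairSum_cons, pairSum_nil, sum_cons, sum_nil, map_add, map_neg,
    LinearMap.neg_apply, hQ.self_eq_zero, ← hQ.neg x y]
  abel

variable {ι : Type*}

def commutatorChain (x y : ι → E) (l : List ι) : List E :=
  l.flatMap fun i => commutatorWord (x i) (y i)

lemma length_commutatorChain (x y : ι → E) (l : List ι) :
    (commutatorChain x y l).length = 8 * l.length := by
  induction l with
  | nil => rfl
  | cons i l ih =>
    rw [commutatorChain, flatMap_cons, length_append, ← commutatorChain, ih,
      length_commutatorWord, length_cons]
    ring

lemma sum_commutatorChain (x y : ι → E) (l : List ι) : (commutatorChain x y l).sum = 0 := by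
  induction l with
  | nil => rfl
  | cons i l ih =>
    rw [commutatorChain, flatMap_cons, sum_append, ← commutatorChain, ih, sum_commutatorWord,
      add_zero]

lemma moment_commutatorChain (x y : ι → E) (l : List ι) : (commutatorChain x y l).moment = 0 := by
  induction l with
  | nil => rfl
  | cons i l ih =>
    rw [commutatorChain, flatMap_cons, moment_append, ← commutatorChain, ih,
      sum_commutatorChain]
    simp

lemma pairSum_commutatorChain {Q : E →ₗ[R] E →ₗ[R] F} (hQ : Q.IsAlt) (x y : ι → E)
    (l : List ι) : (commutatorChain x y l).pairSum Q = 4 • (l.map fun i => Q (x i) (y i)).sum := by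
  induction l with
  | nil => simp [commutatorChain]
  | cons i l ih =>
    rw [commutatorChain, flatMap_cons, pairSum_append, ← commutatorChain, ih,
      sum_commutatorChain, pairSum_commutatorWord hQ]
    simp [smul_add]

end AddCommGroup

section Norm

variable {E ι : Type*} [SeminormedAddCommGroup E]

lemma sum_map_norm_commutatorWord (x y : E) :
    ((commutatorWord x y).map (‖·‖)).sum = 4 * (‖x‖ + ‖y‖) := by
  simp only [commutatorWord, map_cons, map_nil, sum_cons, sum_nil, norm_neg]; ring

lemma sum_map_norm_commutatorChain (x y : ι → E) (l : List ι) :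
    ((commutatorChain x y l).map (‖·‖)).sum = 4 * (l.map fun i => ‖x i‖ + ‖y i‖).sum := by
  induction l with
  | nil => simp [commutatorChain]
  | cons i l ih =>
    rw [commutatorChain, flatMap_cons, map_append, sum_append, ← commutatorChain, ih,
      sum_map_norm_commutatorWord, map_cons, sum_cons]
    ring

end Norm

end List

lemma exists_coeffs_abs_le_of_span_eq_top {ι F : Type*} [Fintype ι] [NormedAddCommGroup F]
    [NormedSpace ℝ F] [FiniteDimensional ℝ F] (w : ι → F)
    (hw : Submodule.span ℝ (Set.range w) = ⊤) :
    ∃ K, 0 ≤ K ∧ ∀ t, ∃ c : ι → ℝ, ∑ i, c i • w i = t ∧ ∀ i, |c i| ≤ K * ‖t‖ := by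
  obtain ⟨g, hg⟩ := (Fintype.linearCombination ℝ w).exists_rightInverse_of_surjective
    (by rw [Fintype.range_linearCombination, hw])
  refine ⟨‖LinearMap.toContinuousLinearMap g‖, norm_nonneg _, fun t => ⟨g t, ?_, fun i => ?_⟩⟩
  · simpa [Fintype.linearCombination_apply] using LinearMap.congr_fun hg t
  · calc |g t i| ≤ ‖g t‖ := norm_le_pi_norm (g t) i
      _ ≤ _ := (LinearMap.toContinuousLinearMap g).le_opNorm t

lemma Real.exists_mul_eq_abs_eq_sqrt (s : ℝ) :
    ∃ α β : ℝ, α * β = s ∧ |α| = √|s| ∧ |β| = √|s| := by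
  rcases eq_or_ne s 0 with rfl | hs
  · exact ⟨0, 0, by simp⟩
  refine ⟨√|s|, s / √|s|, mul_div_cancel₀ s (by positivity), abs_of_nonneg (Real.sqrt_nonneg _), ?_⟩
  rw [abs_div, abs_of_nonneg (Real.sqrt_nonneg _), Real.div_sqrt]

section StepTwo

variable {E F ι : Type*} [NormedAddCommGroup E] [NormedSpace ℝ E] [NormedAddCommGroup F]
  [NormedSpace ℝ F] [FiniteDimensional ℝ F] [Fintype ι] {Q : E →ₗ[ℝ] E →ₗ[ℝ] F}

lemma exists_list_sum_eq_zero_moment_eq_zero_pairSum_eq (hQ : Q.IsAlt) (a b : ι → E)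
    (hspan : Submodule.span ℝ (Set.range fun i => Q (a i) (b i)) = ⊤) :
    ∃ C, 0 ≤ C ∧ ∀ t : F, ∃ G : List E, G.length = 8 * Fintype.card ι ∧ G.sum = 0 ∧
      G.moment = 0 ∧ G.pairSum Q = t ∧ (G.map (‖·‖)).sum ≤ C * √‖t‖ := by
  obtain ⟨K, hK, hcoeff⟩ := exists_coeffs_abs_le_of_span_eq_top _ hspan
  refine ⟨∑ i, 4 * √K * (‖a i‖ + ‖b i‖), by positivity, fun t => ?_⟩
  obtain ⟨c, hct, hcK⟩ := hcoeff t
  choose α β hαβ hα hβ using fun i => Real.exists_mul_eq_abs_eq_sqrt (c i / 4)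
  have hsqrt (i : ι) : √|c i / 4| ≤ √K * √‖t‖ := by
    rw [← Real.sqrt_mul hK]
    refine Real.sqrt_le_sqrt ((abs_div (c i) 4).trans_le ?_)
    linarith [hcK i, abs_nonneg (c i)]
  refine ⟨List.commutatorChain (fun i => α i • a i) (fun i => β i • b i) univ.toList,
    by simp [List.length_commutatorChain], List.sum_commutatorChain ..,
    List.moment_commutatorChain .., ?_, ?_⟩
  · rw [List.pairSum_commutatorChain hQ, Finset.sum_map_toList, ← hct, Finset.smul_sum]
    refine Finset.sum_congr rfl fun i _ => ?_
    rw [LinearMap.map_smul₂, map_smul, smul_smul, ← Nat.cast_smul_eq_nsmul ℝ, smul_smul, hαβ]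
    ring_nf
  · rw [List.sum_map_norm_commutatorChain, Finset.sum_map_toList, Finset.mul_sum, Finset.sum_mul]
    refine Finset.sum_le_sum fun i _ => ?_
    rw [norm_smul, norm_smul, Real.norm_eq_abs, Real.norm_eq_abs, hα, hβ, ← mul_add]
    nlinarith [hsqrt i, add_nonneg (norm_nonneg (a i)) (norm_nonneg (b i))]

lemma exists_list_sum_eq_moment_eq_pairSum_eq (hQ : Q.IsAlt) (a b : ι → E)
    (hspan : Submodule.span ℝ (Set.range fun i => Q (a i) (b i)) = ⊤) :
    ∃ (p : ℕ) (C : ℝ), 0 < C ∧ ∀ (z : E) (t : F), ∃ L : List E, L.length = p ∧ L.sum = z ∧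
      (2 : ℝ) • L.moment = (2 * p - 1 : ℝ) • z ∧ L.pairSum Q = t ∧
      (L.map (‖·‖)).sum ≤ C * (‖z‖ + √‖t‖) := by
  obtain ⟨C, hC, hG⟩ := exists_list_sum_eq_zero_moment_eq_zero_pairSum_eq hQ a b hspan
  set p := 2 + 8 * Fintype.card ι
  have hp : (2 : ℝ) ≤ p := by exact_mod_cast Nat.le_add_right 2 _
  set δ : ℝ := p - 1 / 2 with hδ
  refine ⟨p, 2 * p + C, by positivity, fun z t => ?_⟩
  obtain ⟨G, hlen, hsum, hmom, hpair, hnorm⟩ := hG t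
  refine ⟨[(1 - δ) • z, δ • z] ++ G, ?_, ?_, ?_, ?_, ?_⟩
  · rw [List.length_append, hlen]; rfl
  · rw [List.sum_append, hsum]; simp only [List.sum_cons, List.sum_nil]; module
  · rw [List.moment_append, hmom, hsum]
    simp only [List.moment_cons, List.moment_nil, List.sum_cons, List.sum_nil, smul_zero, δ]
    module
  · rw [List.pairSum_append, hpair, hsum]
    simp [hQ.self_eq_zero]
  · have hz : ‖(1 - δ) • z‖ + ‖δ • z‖ ≤ 2 * p * ‖z‖ := by
      rw [norm_smul, norm_smul, Real.norm_eq_abs, Real.norm_eq_abs, abs_of_neg (by linarith),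
        abs_of_pos (by linarith), ← add_mul]
      gcongr
      linarith [hδ]
    have := norm_nonneg z
    have := Real.sqrt_nonneg ‖t‖
    simp only [List.map_append, List.map_cons, List.map_nil, List.sum_append, List.sum_cons,
      List.sum_nil, add_zero]
    nlinarith

end StepTwo

/-- Let `Q : ℝ^m × ℝ^m → ℝ^ℓ` be bilinear, alternating, and satisfy
the Hörmander condition `span{Q(e_j, e_k) : j < k} = ℝ^ℓ`.  Then there exist `p ∈ ℕ`
and `C > 0` such that for every `(z,t)`, the system `Σ_j u_j = z`,
`Σ_j (p−2j+1) u_j = −p z`, `Σ_{j<k} Q(u_j, u_k) = t` has a solution `u₁, …, u_p` with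
`Σ_j |u_j| ≤ C(|z| + |t|^{1/2})` (Euclidean norms; the `1`-based coefficient `p−2j+1`
reads `p−2j−1` for `0`-based `j : Fin p`). -/
theorem step_two_system_solvable (m l : ℕ)
    (Q : EuclideanSpace ℝ (Fin m) →ₗ[ℝ] EuclideanSpace ℝ (Fin m) →ₗ[ℝ] EuclideanSpace ℝ (Fin l))
    (hQ : ∀ z, Q z z = 0)
    (hspan : Submodule.span ℝ {x : EuclideanSpace ℝ (Fin l) |
        ∃ j k : Fin m, j < k ∧
          x = Q (EuclideanSpace.single j 1) (EuclideanSpace.single k 1)} = ⊤) :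
    ∃ (p : ℕ) (C : ℝ), 0 < C ∧
      ∀ (z : EuclideanSpace ℝ (Fin m)) (t : EuclideanSpace ℝ (Fin l)),
        ∃ u : Fin p → EuclideanSpace ℝ (Fin m),
          (∑ j, u j) = z ∧
          (∑ j : Fin p, (((p : ℝ) - 2 * ((j : ℕ) : ℝ) - 1) • u j)) = -((p : ℝ) • z) ∧
          (∑ j : Fin p, ∑ k ∈ Finset.Ioi j, Q (u j) (u k)) = t ∧
          ∑ j, ‖u j‖ ≤ C * (‖z‖ + Real.sqrt ‖t‖) := by
  have hspan' : Submodule.span ℝ (Set.range fun jk : Fin m × Fin m =>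
      Q (EuclideanSpace.single jk.1 1) (EuclideanSpace.single jk.2 1)) = ⊤ :=
    eq_top_mono (Submodule.span_mono <| by rintro _ ⟨j, k, -, rfl⟩; exact ⟨(j, k), rfl⟩) hspan
  obtain ⟨p, C, hC, hsol⟩ := exists_list_sum_eq_moment_eq_pairSum_eq hQ _ _ hspan'
  refine ⟨p, C, hC, fun z t => ?_⟩
  obtain ⟨L, hlen, hsum, hmom, hpair, hnorm⟩ := hsol z t
  obtain ⟨u, rfl⟩ := List.exists_ofFn_eq L hlen
  refine ⟨u, by rwa [List.sum_ofFn] at hsum, ?_, by rwa [List.pairSum_ofFn] at hpair,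
    by rwa [List.map_ofFn, List.sum_ofFn] at hnorm⟩
  have hcoeff (j : Fin p) : (p : ℝ) - 2 * (j : ℕ) - 1 = (p - 1) - 2 * (j : ℕ) := by ring
  simp_rw [hcoeff, List.sum_sub_mul_smul_eq_sub_smul_moment, hmom, hsum]
  module
end

section
/- Let Q : ℝ^m × ℝ^m → ℝ^ℓ be bilinear and alternating, and assume span{Q(e_j, e_k) : 1 ≤ j < k ≤ m} = ℝ^ℓ. Then there exist h ∈ ℕ and C > 0 such that for every t ∈ ℝ^ℓ there exist vectors v₁, w₁, v₂, w₂, …, v_h, w_h ∈ ℝ^m with Σ_{i=1}^h Q(v_i, w_i) = t and max_i(|v_i|, |w_i|) ≤ C|t|^{1/2}. -/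
/-! The Hörmander condition makes `c ↦ ∑ c_{jk} • Q(e_j, e_k)` a linear surjection onto a
finite-dimensional space, so it has a bounded linear right inverse: every `t` is such a sum with
`|c_{jk}| ≤ K‖t‖`. Each term `c • Q(e_j, e_k)` equals `Q(√|c| • e_j, (sign c * √|c|) • e_k)`,
whose arguments have norm at most `√(K‖t‖)`. -/

open Real

theorem exists_coeffs_norm_le_of_span_eq_top {ι G : Type*} [Fintype ι]
    [NormedAddCommGroup G] [NormedSpace ℝ G] [FiniteDimensional ℝ G] (u : ι → G)
    (hu : Submodule.span ℝ (Set.range u) = ⊤) :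
    ∃ K : ℝ, 0 ≤ K ∧ ∀ t : G, ∃ c : ι → ℝ, ∑ i, c i • u i = t ∧ ∀ i, |c i| ≤ K * ‖t‖ := by
  obtain ⟨g, hg⟩ := (Fintype.linearCombination ℝ u).exists_rightInverse_of_surjective
    (by rw [Fintype.range_linearCombination, hu])
  let g' := LinearMap.toContinuousLinearMap g
  refine ⟨‖g'‖, norm_nonneg _, fun t => ⟨g t, ?_, fun i => ?_⟩⟩
  · simpa [Fintype.linearCombination_apply] using LinearMap.congr_fun hg t
  · exact (norm_le_pi_norm (g t) i).trans (g'.le_opNorm t)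

namespace LinearMap

variable {E F : Type*} [SeminormedAddCommGroup E] [NormedSpace ℝ E]
  [SeminormedAddCommGroup F] [NormedSpace ℝ F]

theorem exists_apply_apply_eq_smul {G : Type*} [AddCommGroup G] [Module ℝ G]
    (B : E →ₗ[ℝ] F →ₗ[ℝ] G) (c : ℝ) (x : E) (y : F) :
    ∃ x' y', B x' y' = c • B x y ∧ ‖x'‖ ≤ √|c| * ‖x‖ ∧ ‖y'‖ ≤ √|c| * ‖y‖ := by
  refine ⟨√|c| • x, (SignType.sign c * √|c|) • y, ?_, ?_, ?_⟩
  · rw [map_smul, map_smul, smul_apply, smul_smul, mul_assoc,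
      mul_self_sqrt (abs_nonneg c), sign_mul_abs]
  · rw [norm_smul, norm_of_nonneg (sqrt_nonneg _)]
  · rw [norm_smul, norm_mul, norm_of_nonneg (sqrt_nonneg _)]
    have hsign : ‖(SignType.sign c : ℝ)‖ ≤ 1 := by cases SignType.sign c <;> simp
    rw [mul_assoc]
    exact mul_le_of_le_one_left (by positivity) hsign

theorem exists_sum_apply_apply_eq_of_span_eq_top {G : Type*} [NormedAddCommGroup G]
    [NormedSpace ℝ G] [FiniteDimensional ℝ G] {ι : Type*} [Fintype ι] (B : E →ₗ[ℝ] F →ₗ[ℝ] G)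
    (x : ι → E) (y : ι → F) (hx : ∀ i, ‖x i‖ ≤ 1) (hy : ∀ i, ‖y i‖ ≤ 1)
    (hspan : Submodule.span ℝ (Set.range fun i => B (x i) (y i)) = ⊤) :
    ∃ C : ℝ, 0 < C ∧ ∀ t : G, ∃ v : ι → E, ∃ w : ι → F,
      ∑ i, B (v i) (w i) = t ∧ ∀ i, ‖v i‖ ≤ C * √‖t‖ ∧ ‖w i‖ ≤ C * √‖t‖ := by
  obtain ⟨K, hK, hcoeffs⟩ := exists_coeffs_norm_le_of_span_eq_top _ hspan
  refine ⟨√K + 1, by positivity, fun t => ?_⟩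
  obtain ⟨c, hct, hcK⟩ := hcoeffs t
  choose v w hvw hv hw using fun i => B.exists_apply_apply_eq_smul (c i) (x i) (y i)
  have hbound : ∀ i {a : ℝ}, a ≤ 1 → √|c i| * a ≤ (√K + 1) * √‖t‖ := fun i a ha =>
    calc √|c i| * a ≤ √(K * ‖t‖) :=
          mul_le_of_le_one_right (sqrt_nonneg _) ha |>.trans (sqrt_le_sqrt (hcK i))
      _ = √K * √‖t‖ := sqrt_mul hK _
      _ ≤ (√K + 1) * √‖t‖ := by gcongr; linarith
  exact ⟨v, w, by simp only [hvw, hct],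
    fun i => ⟨(hv i).trans (hbound i (hx i)), (hw i).trans (hbound i (hy i))⟩⟩

end LinearMap

theorem step_two_quadratic_surjectivity_with_bounds_general (m l : ℕ)
    (Q : EuclideanSpace ℝ (Fin m) →ₗ[ℝ] EuclideanSpace ℝ (Fin m) →ₗ[ℝ] EuclideanSpace ℝ (Fin l))
    (hspan : Submodule.span ℝ {x : EuclideanSpace ℝ (Fin l) |
        ∃ j k : Fin m, j < k ∧
          x = Q (EuclideanSpace.single j 1) (EuclideanSpace.single k 1)} = ⊤) :
    ∃ (h : ℕ) (C : ℝ), 0 < C ∧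
      ∀ t : EuclideanSpace ℝ (Fin l),
        ∃ v w : Fin h → EuclideanSpace ℝ (Fin m),
          (∑ i, Q (v i) (w i)) = t ∧
          ∀ i, ‖v i‖ ≤ C * Real.sqrt ‖t‖ ∧ ‖w i‖ ≤ C * Real.sqrt ‖t‖ := by
  let e : Fin m → EuclideanSpace ℝ (Fin m) := fun j => EuclideanSpace.single j 1
  obtain ⟨C, hC, hQ⟩ := Q.exists_sum_apply_apply_eq_of_span_eq_top
    (fun p : Fin m × Fin m => e p.1) (fun p => e p.2) (by simp [e]) (by simp [e]) <| by
      rw [eq_top_iff, ← hspan]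
      exact Submodule.span_mono fun _ ⟨j, k, _, hx⟩ => ⟨(j, k), hx.symm⟩
  let σ := Fintype.equivFin (Fin m × Fin m)
  refine ⟨Fintype.card (Fin m × Fin m), C, hC, fun t => ?_⟩
  obtain ⟨v, w, hsum, hvw⟩ := hQ t
  exact ⟨v ∘ σ.symm, w ∘ σ.symm, (σ.symm.sum_comp fun p => Q (v p) (w p)).trans hsum,
    fun i => hvw _⟩

/-- Let `Q : ℝ^m × ℝ^m → ℝ^ℓ` be bilinear, alternating, and satisfy
the Hörmander condition `span{Q(e_j, e_k) : j < k} = ℝ^ℓ`.  Then there exist `h ∈ ℕ`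
and `C > 0` such that every `t ∈ ℝ^ℓ` can be written as `t = Σ_{i=1}^h Q(v_i, w_i)`
with `max(|v_i|, |w_i|) ≤ C |t|^{1/2}` for every `i` (Euclidean norms). -/
theorem step_two_quadratic_surjectivity_with_bounds (m l : ℕ)
    (Q : EuclideanSpace ℝ (Fin m) →ₗ[ℝ] EuclideanSpace ℝ (Fin m) →ₗ[ℝ] EuclideanSpace ℝ (Fin l))
    (hQ : ∀ z, Q z z = 0)
    (hspan : Submodule.span ℝ {x : EuclideanSpace ℝ (Fin l) |
        ∃ j k : Fin m, j < k ∧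
          x = Q (EuclideanSpace.single j 1) (EuclideanSpace.single k 1)} = ⊤) :
    ∃ (h : ℕ) (C : ℝ), 0 < C ∧
      ∀ t : EuclideanSpace ℝ (Fin l),
        ∃ v w : Fin h → EuclideanSpace ℝ (Fin m),
          (∑ i, Q (v i) (w i)) = t ∧
          ∀ i, ‖v i‖ ≤ C * Real.sqrt ‖t‖ ∧ ‖w i‖ ≤ C * Real.sqrt ‖t‖ :=
  step_two_quadratic_surjectivity_with_bounds_general m l Q hspan
end

section
/- Let ξ = (ξ₁, ξ₂) ∈ ℝ² with ξ₁² + ξ₂² = 1, and let ψ : ℝ → ℝ be differentiable with ψ′(s) ≤ 0 for all s. Define F : ℝ⁵ → ℝ by F(x) = ξ₂x₄ − ξ₁x₅ − (ξ₁x₁ + ξ₂x₂)³/6 − ψ(ξ₁x₁ + ξ₂x₂). Then for every x ∈ ℝ⁵, F is differentiable at x and its Fréchet derivative satisfies: (i) dF(x)(−ξ₂X₁(x) + ξ₁X₂(x)) = 0; and (ii) dF(x)(ξ₁X₁(x) + ξ₂X₂(x)) = (1/2)(x₁² + x₂² − (ξ₁x₁ + ξ₂x₂)²) − ψ′(ξ₁x₁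 + ξ₂x₂) ≥ 0. -/
/-! Write `s = ξ₁x₁ + ξ₂x₂` and `r = x₁² + x₂²`. Then `F = ℓ − g ∘ m` with `ℓ(y) = ξ₂y₄ − ξ₁y₅`,
`m(y) = ξ₁y₁ + ξ₂y₂` linear and `g(t) = t³/6 + ψ(t)`. Along the horizontal direction
`αX₁ + βX₂`, `m` changes at rate `ξ₁α + ξ₂β` and `ℓ` at rate `(ξ₁α + ξ₂β) r/2`, so
`dF(x)(αX₁ + βX₂) = (ξ₁α + ξ₂β)(r/2 − s²/2 − ψ′(s))`. The direction `(−ξ₂, ξ₁)` is orthogonal to `ξ`,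
and for `(ξ₁, ξ₂)` the coefficient is `|ξ|² = 1`; nonnegativity is Cauchy–Schwarz `s² ≤ r`
together with `ψ′ ≤ 0`. -/

open ContinuousLinearMap

theorem HasFDerivAt.sub_comp_of_hasDerivAt {E : Type*} [NormedAddCommGroup E] [NormedSpace ℝ E]
    (ℓ m : E →L[ℝ] ℝ) {g : ℝ → ℝ} {g' : ℝ} {x : E} (hg : HasDerivAt g g' (m x)) :
    HasFDerivAt (fun y => ℓ y - g (m y)) (ℓ - g' • m) x :=
  ℓ.hasFDerivAt.sub (hg.comp_hasFDerivAt x m.hasFDerivAt)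

theorem sq_add_mul_le_of_sq_add_sq_eq_one {ξ₁ ξ₂ : ℝ} (hξ : ξ₁ ^ 2 + ξ₂ ^ 2 = 1) (a b : ℝ) :
    (ξ₁ * a + ξ₂ * b) ^ 2 ≤ a ^ 2 + b ^ 2 := by
  nlinarith [sq_nonneg (ξ₁ * b - ξ₂ * a)]

noncomputable section

namespace FreeCarnotStepThree

def X₁ (x : Fin 5 → ℝ) : Fin 5 → ℝ := ![1, 0, -(x 1) / 2, 0, -((x 0) ^ 2 + (x 1) ^ 2) / 2]

def X₂ (x : Fin 5 → ℝ) : Fin 5 → ℝ := ![0, 1, (x 0) / 2, ((x 0) ^ 2 + (x 1) ^ 2) / 2, 0]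

def horizontalPairing (ξ₁ ξ₂ : ℝ) : (Fin 5 → ℝ) →L[ℝ] ℝ := ξ₁ • proj 0 + ξ₂ • proj 1

def verticalPairing (ξ₁ ξ₂ : ℝ) : (Fin 5 → ℝ) →L[ℝ] ℝ := ξ₂ • proj 3 - ξ₁ • proj 4

theorem horizontalPairing_apply (ξ₁ ξ₂ : ℝ) (y : Fin 5 → ℝ) :
    horizontalPairing ξ₁ ξ₂ y = ξ₁ * y 0 + ξ₂ * y 1 := rfl

theorem verticalPairing_apply (ξ₁ ξ₂ : ℝ) (y : Fin 5 → ℝ) :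
    verticalPairing ξ₁ ξ₂ y = ξ₂ * y 3 - ξ₁ * y 4 := rfl

theorem verticalPairing_sub_smul_horizontalPairing_apply_horizontal (ξ₁ ξ₂ c α β : ℝ)
    (x : Fin 5 → ℝ) :
    (verticalPairing ξ₁ ξ₂ - c • horizontalPairing ξ₁ ξ₂) (α • X₁ x + β • X₂ x)
      = (ξ₁ * α + ξ₂ * β) * ((x 0 ^ 2 + x 1 ^ 2) / 2 - c) := by
  simp only [sub_apply, smul_apply, verticalPairing_apply, horizontalPairing_apply, X₁, X₂,
    Pi.add_apply, Pi.smul_apply, smul_eq_mul, Matrix.cons_val, Matrix.cons_val_zero,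
    Matrix.cons_val_one]
  ring

end FreeCarnotStepThree

end

open FreeCarnotStepThree

/-- On `ℝ⁵` (coordinates indexed `0,…,4`), consider the horizontal
vector fields of the free Carnot group of step 3 and rank 2,
`X₁(x) = (1, 0, −x₂/2, 0, −(x₁²+x₂²)/2)` and `X₂(x) = (0, 1, x₁/2, (x₁²+x₂²)/2, 0)`.
Let `ξ = (ξ₁,ξ₂)` be a unit vector, `ψ` differentiable with `ψ′ ≤ 0`, and
`F(x) = ξ₂x₄ − ξ₁x₅ − ⟨ξ,x⟩³/6 − ψ(⟨ξ,x⟩)`.  Then `F` is differentiable at every `x`,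
`dF(x)(−ξ₂X₁(x) + ξ₁X₂(x)) = 0`, and
`dF(x)(ξ₁X₁(x) + ξ₂X₂(x)) = (1/2)(x₁² + x₂² − ⟨ξ,x⟩²) − ψ′(⟨ξ,x⟩) ≥ 0`. -/
theorem free_step_three_constant_horizontal_normal (ξ₁ ξ₂ : ℝ)
    (hξ : ξ₁ ^ 2 + ξ₂ ^ 2 = 1)
    (ψ ψ' : ℝ → ℝ) (hψ : ∀ s, HasDerivAt ψ (ψ' s) s) (hψ' : ∀ s, ψ' s ≤ 0)
    (F : (Fin 5 → ℝ) → ℝ)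
    (hF : ∀ x, F x = ξ₂ * x 3 - ξ₁ * x 4 - (ξ₁ * x 0 + ξ₂ * x 1) ^ 3 / 6
          - ψ (ξ₁ * x 0 + ξ₂ * x 1))
    (X1 X2 : (Fin 5 → ℝ) → (Fin 5 → ℝ))
    (hX1 : ∀ x, X1 x = ![1, 0, -(x 1) / 2, 0, -((x 0) ^ 2 + (x 1) ^ 2) / 2])
    (hX2 : ∀ x, X2 x = ![0, 1, (x 0) / 2, ((x 0) ^ 2 + (x 1) ^ 2) / 2, 0])
    (x : Fin 5 → ℝ) :
    DifferentiableAt ℝ F x ∧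
    fderiv ℝ F x (-ξ₂ • X1 x + ξ₁ • X2 x) = 0 ∧
    fderiv ℝ F x (ξ₁ • X1 x + ξ₂ • X2 x)
      = (1 / 2) * ((x 0) ^ 2 + (x 1) ^ 2 - (ξ₁ * x 0 + ξ₂ * x 1) ^ 2)
        - ψ' (ξ₁ * x 0 + ξ₂ * x 1) ∧
    0 ≤ (1 / 2) * ((x 0) ^ 2 + (x 1) ^ 2 - (ξ₁ * x 0 + ξ₂ * x 1) ^ 2)
        - ψ' (ξ₁ * x 0 + ξ₂ * x 1) := by
  set s := ξ₁ * x 0 + ξ₂ * x 1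
  have hg : HasDerivAt (fun t => t ^ 3 / 6 + ψ t) (s ^ 2 / 2 + ψ' s) s := by
    refine (((hasDerivAt_pow 3 s).div_const 6).add (hψ s)).congr_deriv ?_
    norm_num
    ring
  have hF_eq : F = fun y => verticalPairing ξ₁ ξ₂ y
      - (fun t => t ^ 3 / 6 + ψ t) (horizontalPairing ξ₁ ξ₂ y) := by
    funext y
    simp only [hF, verticalPairing_apply, horizontalPairing_apply]
    ring
  have hFd : HasFDerivAt F
      (verticalPairing ξ₁ ξ₂ - (s ^ 2 / 2 + ψ' s) • horizontalPairing ξ₁ ξ₂) x := by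
    rw [hF_eq]
    exact HasFDerivAt.sub_comp_of_hasDerivAt (verticalPairing ξ₁ ξ₂) (horizontalPairing ξ₁ ξ₂)
      (x := x) hg
  obtain rfl : X1 = X₁ := funext hX1
  obtain rfl : X2 = X₂ := funext hX2
  refine ⟨hFd.differentiableAt, ?_, ?_, ?_⟩
  · rw [hFd.fderiv, verticalPairing_sub_smul_horizontalPairing_apply_horizontal]
    ring
  · rw [hFd.fderiv, verticalPairing_sub_smul_horizontalPairing_apply_horizontal, ← sq, ← sq, hξ]
    ring
  · linarith [sq_add_mul_le_of_sq_add_sq_eq_one hξ (x 0) (x 1), hψ' s]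
end
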